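/- arXiv:1612.05750 — 5 statements merged into one kernel-verified Lean document; each statement's English description precedes it below -/
import Mathlib

section
/- Let Q be a finite connected graded quiver with grading period r = 0. Then the ℤ-covering quiver P of Q is isomorphic to the disjoint union of ℤ copies of Q: the connected components of P are P^j, j ∈ ℤ, where P^j is the component containing (i,j) for a fixed vertex i of Q, these components are pairwise distinct, and each is isomorphic to Q as an ungraded quiver. -/
/-- A graded quiver: a quiver with each arrow assigned an integer degree. -/
structure GradedQuiver where
  V : Type
  Arr : V → V → Type
  deg : ∀ {a b : V}, Arr a b → ℤ

namespace GradedQuiver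

variable (Q : GradedQuiver)

/-- Paths: composable sequences of arrows (including trivial paths). -/
inductive Path : Q.V → Q.V → Type
  | nil (a : Q.V) : Path a a
  | cons {a b c : Q.V} (p : Path a b) (e : Q.Arr b c) : Path a c

/-- The length of a path. -/
def Path.length {Q : GradedQuiver} : ∀ {a b : Q.V}, Q.Path a b → ℕ
  | _, _, .nil _ => 0
  | _, _, .cons p _ => p.length + 1

/-- The virtual degree of a path: the sum of `d(α) = 1 - |α|` over its arrows. -/
def Path.vdeg {Q : GradedQuiver} : ∀ {a b : Q.V}, Q.Path a b → ℤ
  | _, _, .nil _ => 0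
  | _, _, .cons p e => p.vdeg + (1 - Q.deg e)

/-- The degree of a path: the sum of the degrees of its arrows. -/
def Path.degree {Q : GradedQuiver} : ∀ {a b : Q.V}, Q.Path a b → ℤ
  | _, _, .nil _ => 0
  | _, _, .cons p e => p.degree + Q.deg e

/-- Walks: formal composites of arrows and formal inverses of arrows with
matching endpoints. -/
inductive Walk : Q.V → Q.V → Type
  | nil (a : Q.V) : Walk a a
  | consArr {a b c : Q.V} (w : Walk a b) (e : Q.Arr b c) : Walk a c
  | consInv {a b c : Q.V} (w : Walk a b) (e : Q.Arr c b) : Walk a c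

/-- The virtual degree of a walk: `d(α) = 1 - |α|` for each arrow letter,
`-(1 - |α|)` for each inverse-arrow letter. -/
def Walk.vdeg {Q : GradedQuiver} : ∀ {a b : Q.V}, Q.Walk a b → ℤ
  | _, _, .nil _ => 0
  | _, _, .consArr w e => w.vdeg + (1 - Q.deg e)
  | _, _, .consInv w e => w.vdeg - (1 - Q.deg e)

/-- `r` is the grading period of `Q`: it is `0` if every closed walk has virtual
degree `0`, and otherwise the minimal positive integer occurring as the virtual
degree of some closed walk. -/
def IsGradingPeriod (r : ℕ) : Prop :=
  (r = 0 ∧ ∀ (a : Q.V) (w : Q.Walk a a), w.vdeg = 0) ∨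
  (0 < r ∧ (∃ (a : Q.V) (w : Q.Walk a a), w.vdeg = (r : ℤ)) ∧
    ∀ (a : Q.V) (w : Q.Walk a a), 0 < w.vdeg → (r : ℤ) ≤ w.vdeg)

/-- `Q` is connected: any two vertices are joined by a walk. -/
def Connected : Prop := ∀ a b : Q.V, Nonempty (Q.Walk a b)

/-- The ℤ-covering quiver `P` of `Q`: vertices are pairs `(i, j)`, `i ∈ Q₀`,
`j ∈ ℤ`, and arrows `(α, j) : (s α, j) → (t α, j + d α)` with `d α = 1 - |α|`.
It is regarded as a graded quiver concentrated in degree `0`. -/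
def Cover : GradedQuiver where
  V := Q.V × ℤ
  Arr := fun x y => { e : Q.Arr x.1 y.1 // y.2 = x.2 + (1 - Q.deg e) }
  deg := fun _ => 0

end GradedQuiver

namespace GradedQuiver

/-- The connected component of the ℤ-covering quiver `P` containing the vertex
`x0`, as a full subquiver: its vertices are the vertices of `P` joined to `x0` by a
walk. -/
def Component (Q : GradedQuiver) (x0 : Q.Cover.V) : GradedQuiver where
  V := { x : Q.Cover.V // Nonempty (Q.Cover.Walk x0 x) }
  Arr := fun a b => Q.Cover.Arr a.val b.val
  deg := fun _ => 0

end GradedQuiver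

/-- An isomorphism of (the underlying ungraded) quivers: bijections on vertices and
on arrows commuting with the source and target maps. -/
structure QuivIso (Q₁ Q₂ : GradedQuiver) where
  vEquiv : Q₁.V ≃ Q₂.V
  aEquiv : ∀ x y : Q₁.V, Q₁.Arr x y ≃ Q₂.Arr (vEquiv x) (vEquiv y)

/-!
When every closed walk of `Q` has virtual degree `0`, the virtual degree of a walk from `i`
to `a` depends only on `a`; call it the potential `φ a` (`potential hconn i a`). A walk in the
cover `P` projects to a walk in `Q` whose virtual degree is the change of the `ℤ`-coordinate,
and conversely walks of `Q` lift. Hence `(a, k)` lies in the component of `(i, j)` exactly when `k = j + φ a`, so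
that component is the graph of `φ` shifted by `j`, and projecting to `Q` identifies it with `Q`.
-/

namespace GradedQuiver

variable {Q : GradedQuiver}

def Walk.append : ∀ {a b c : Q.V}, Q.Walk a b → Q.Walk b c → Q.Walk a c
  | _, _, _, w, .nil _ => w
  | _, _, _, w, .consArr w' e => .consArr (w.append w') e
  | _, _, _, w, .consInv w' e => .consInv (w.append w') e

@[simp]
lemma Walk.vdeg_append : ∀ {a b c : Q.V} (w : Q.Walk a b) (w' : Q.Walk b c),
    (w.append w').vdeg = w.vdeg + w'.vdeg
  | _, _, _, _, .nil _ => by simp [Walk.append, Walk.vdeg]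
  | _, _, _, w, .consArr w' e => by
      simp only [Walk.append, Walk.vdeg, Walk.vdeg_append w w']; ring
  | _, _, _, w, .consInv w' e => by
      simp only [Walk.append, Walk.vdeg, Walk.vdeg_append w w']; ring

def Walk.reverse : ∀ {a b : Q.V}, Q.Walk a b → Q.Walk b a
  | _, _, .nil a => .nil a
  | _, _, .consArr w e => (Walk.consInv (.nil _) e).append w.reverse
  | _, _, .consInv w e => (Walk.consArr (.nil _) e).append w.reverse

@[simp]
lemma Walk.vdeg_reverse : ∀ {a b : Q.V} (w : Q.Walk a b), w.reverse.vdeg = -w.vdeg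
  | _, _, .nil _ => by simp [Walk.reverse, Walk.vdeg]
  | _, _, .consArr w e => by
      simp only [Walk.reverse, Walk.vdeg_append, Walk.vdeg, Walk.vdeg_reverse w]; ring
  | _, _, .consInv w e => by
      simp only [Walk.reverse, Walk.vdeg_append, Walk.vdeg, Walk.vdeg_reverse w]; ring

def Walk.proj : ∀ {x y : Q.Cover.V}, Q.Cover.Walk x y → Q.Walk x.1 y.1
  | _, _, .nil _ => .nil _
  | _, _, .consArr W e => W.proj.consArr e.1
  | _, _, .consInv W e => W.proj.consInv e.1

lemma Walk.vdeg_proj : ∀ {x y : Q.Cover.V} (W : Q.Cover.Walk x y), W.proj.vdeg = y.2 - x.2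
  | _, _, .nil _ => by simp [Walk.proj, Walk.vdeg]
  | _, _, .consArr W e => by
      have := e.2
      simp only [Walk.proj, Walk.vdeg, Walk.vdeg_proj W]; omega
  | _, _, .consInv W e => by
      have := e.2
      simp only [Walk.proj, Walk.vdeg, Walk.vdeg_proj W]; omega

lemma Walk.nonempty_lift : ∀ {a b : Q.V} (w : Q.Walk a b) (j : ℤ),
    Nonempty (Q.Cover.Walk (a, j) (b, j + w.vdeg))
  | _, _, .nil a, j => by simpa [Walk.vdeg] using ⟨Walk.nil (Q := Q.Cover) (a, j)⟩
  | _, _, .consArr w e, j => by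
      obtain ⟨W⟩ := w.nonempty_lift j
      refine ⟨W.consArr (⟨e, ?_⟩ : Q.Cover.Arr _ ((_, _) : Q.Cover.V))⟩
      simp only [Walk.vdeg]; ring
  | _, _, .consInv w e, j => by
      obtain ⟨W⟩ := w.nonempty_lift j
      refine ⟨W.consInv (⟨e, ?_⟩ : Q.Cover.Arr ((_, _) : Q.Cover.V) _)⟩
      simp only [Walk.vdeg]; ring

lemma IsGradingPeriod.vdeg_eq_zero (hper : Q.IsGradingPeriod 0) {a : Q.V} (w : Q.Walk a a) :
    w.vdeg = 0 := by
  rcases hper with ⟨-, h⟩ | ⟨h, -⟩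
  · exact h a w
  · exact absurd h (lt_irrefl 0)

noncomputable def potential (hconn : Q.Connected) (i a : Q.V) : ℤ := (hconn i a).some.vdeg

variable (hconn : Q.Connected) (hper : Q.IsGradingPeriod 0) {i : Q.V}
include hconn hper

lemma vdeg_eq_potential {a : Q.V} (w : Q.Walk i a) : w.vdeg = potential hconn i a := by
  have h := hper.vdeg_eq_zero (w.append (hconn i a).some.reverse)
  rw [Walk.vdeg_append, Walk.vdeg_reverse] at h
  rw [potential]; omega

lemma potential_self : potential hconn i i = 0 :=
  hper.vdeg_eq_zero _

lemma potential_arr {a b : Q.V} (e : Q.Arr a b) :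
    potential hconn i b = potential hconn i a + (1 - Q.deg e) := by
  rw [← vdeg_eq_potential hconn hper ((hconn i a).some.consArr e), Walk.vdeg, potential]

lemma nonempty_cover_walk_iff {j k : ℤ} {a : Q.V} :
    Nonempty (Q.Cover.Walk (i, j) (a, k)) ↔ k = j + potential hconn i a := by
  constructor
  · rintro ⟨W⟩
    have := W.vdeg_proj
    rw [vdeg_eq_potential hconn hper] at this
    simp only at this; omega
  · rintro rfl
    simpa [vdeg_eq_potential hconn hper] using ((hconn i a).some.nonempty_lift j)

def coverArrEquiv {j : ℤ} {x y : Q.Cover.V} (hx : x.2 = j + potential hconn i x.1)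
    (hy : y.2 = j + potential hconn i y.1) : Q.Cover.Arr x y ≃ Q.Arr x.1 y.1 where
  toFun e := e.val
  invFun e := ⟨e, by rw [hx, hy, potential_arr hconn hper e]; ring⟩
  left_inv _ := rfl
  right_inv _ := rfl

lemma snd_eq_of_mem_component {j : ℤ} (x : (Q.Component (i, j)).V) :
    x.val.2 = j + potential hconn i x.val.1 :=
  (nonempty_cover_walk_iff hconn hper).1 x.2

noncomputable def componentIso (j : ℤ) : QuivIso (Q.Component (i, j)) Q where
  vEquiv :=
    { toFun := fun x => x.val.1
      invFun := fun a => ⟨(a, j + potential hconn i a),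
        (nonempty_cover_walk_iff hconn hper).2 rfl⟩
      left_inv := fun x => Subtype.ext (Prod.ext rfl (snd_eq_of_mem_component hconn hper x).symm)
      right_inv := fun _ => rfl }
  aEquiv x y := coverArrEquiv hconn hper (snd_eq_of_mem_component hconn hper x)
    (snd_eq_of_mem_component hconn hper y)

end GradedQuiver

theorem stmt_12_general (Q : GradedQuiver)
    (hconn : Q.Connected) (hper : Q.IsGradingPeriod 0) (i : Q.V) :
    (∀ x : Q.Cover.V, ∃ j : ℤ, Nonempty (Q.Cover.Walk (i, j) x)) ∧
    (∀ j j' : ℤ, Nonempty (Q.Cover.Walk (i, j) (i, j')) → j = j') ∧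
    (∀ j : ℤ, Nonempty (QuivIso (GradedQuiver.Component Q (i, j)) Q)) := by
  refine ⟨?_, ?_, fun j => ⟨GradedQuiver.componentIso hconn hper j⟩⟩
  · rintro ⟨a, k⟩
    exact ⟨k - GradedQuiver.potential hconn i a,
      (GradedQuiver.nonempty_cover_walk_iff hconn hper).2 (by ring)⟩
  · intro j j' h
    rw [GradedQuiver.nonempty_cover_walk_iff hconn hper,
      GradedQuiver.potential_self hconn hper] at h
    omega

/-- let `Q` be a finite connected graded quiver with grading period
`0` and fixed vertex `i`. Then the ℤ-covering quiver `P` is the disjoint union of ℤ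
copies of `Q`: every vertex of `P` lies in the component `P^j` of `(i,j)` for some
`j ∈ ℤ`, these components are pairwise distinct, and each of them is isomorphic to
`Q` as an ungraded quiver. -/
theorem stmt_12 (Q : GradedQuiver) (hV : Finite Q.V) (hA : ∀ a b : Q.V, Finite (Q.Arr a b))
    (hconn : Q.Connected) (hper : Q.IsGradingPeriod 0) (i : Q.V) :
    (∀ x : Q.Cover.V, ∃ j : ℤ, Nonempty (Q.Cover.Walk (i, j) x)) ∧
    (∀ j j' : ℤ, Nonempty (Q.Cover.Walk (i, j) (i, j')) → j = j') ∧
    (∀ j : ℤ, Nonempty (QuivIso (GradedQuiver.Component Q (i, j)) Q)) :=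
  stmt_12_general Q hconn hper i
end

section
/- Let Q be a finite connected graded quiver with grading period r ≥ 1 and fixed vertex i. Then the ℤ-covering quiver P of Q is the disjoint union of the connected components P^0, …, P^{r−1}, where P^j denotes the component containing (i,j); moreover P^j = P^{j′} if and only if j ≡ j′ (mod r), and all components are isomorphic to the covering quiver Q̃ of walk-classes at i. -/
namespace GradedQuiver

/-- The covering quiver `Q̃` of `Q` at the vertex `i`: its vertices are the
equivalence classes of walks of `Q` with source `i`, where two walks are equivalent
iff they have the same target and the same virtual degree. A class is completely
determined by (and identified with) the pair (target, virtual degree). Its arrows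
`α^[u] : [u] → [αu]` are given by the arrows `α` of `Q` with `s(α) = t(u)`. It is
regarded as a graded quiver concentrated in degree `0`. -/
def Tilde (Q : GradedQuiver) (i : Q.V) : GradedQuiver where
  V := { x : Q.V × ℤ // ∃ u : Q.Walk i x.1, u.vdeg = x.2 }
  Arr := fun c c' => { a : Q.Arr c.val.1 c'.val.1 // c'.val.2 = c.val.2 + (1 - Q.deg a) }
  deg := fun _ => 0

end GradedQuiver

namespace GradedQuiver

/-- Composition of walks. -/
def Walk.comp {Q : GradedQuiver} : ∀ {a b c : Q.V}, Q.Walk a b → Q.Walk b c → Q.Walk a c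
  | _, _, _, w, .nil _ => w
  | _, _, _, w, .consArr u e => .consArr (w.comp u) e
  | _, _, _, w, .consInv u e => .consInv (w.comp u) e

lemma Walk.comp_vdeg {Q : GradedQuiver} : ∀ {a b c : Q.V} (w : Q.Walk a b) (u : Q.Walk b c),
    (w.comp u).vdeg = w.vdeg + u.vdeg
  | _, _, _, _, .nil _ => by simp [Walk.comp, Walk.vdeg]
  | _, _, _, w, .consArr u e => by
      simp [Walk.comp, Walk.vdeg, Walk.comp_vdeg w u]; ring
  | _, _, _, w, .consInv u e => by
      simp [Walk.comp, Walk.vdeg, Walk.comp_vdeg w u]; ring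

/-- Reverse of a walk. -/
def Walk.rev {Q : GradedQuiver} : ∀ {a b : Q.V}, Q.Walk a b → Q.Walk b a
  | _, _, .nil a => .nil a
  | _, _, .consArr w e => (Walk.consInv (.nil _) e).comp w.rev
  | _, _, .consInv w e => (Walk.consArr (.nil _) e).comp w.rev

lemma Walk.rev_vdeg {Q : GradedQuiver} : ∀ {a b : Q.V} (w : Q.Walk a b),
    w.rev.vdeg = -w.vdeg
  | _, _, .nil _ => by simp [Walk.rev, Walk.vdeg]
  | _, _, .consArr w e => by
      simp [Walk.rev, Walk.comp_vdeg, Walk.vdeg, Walk.rev_vdeg w]; try ring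
  | _, _, .consInv w e => by
      simp [Walk.rev, Walk.comp_vdeg, Walk.vdeg, Walk.rev_vdeg w]; try ring

/-- Iterate of a closed walk. -/
def Walk.pow {Q : GradedQuiver} {a : Q.V} (w : Q.Walk a a) : ℕ → Q.Walk a a
  | 0 => .nil a
  | n + 1 => (w.pow n).comp w

lemma Walk.pow_vdeg {Q : GradedQuiver} {a : Q.V} (w : Q.Walk a a) :
    ∀ n : ℕ, (w.pow n).vdeg = n * w.vdeg
  | 0 => by simp [Walk.pow, Walk.vdeg]
  | n + 1 => by
      simp [Walk.pow, Walk.comp_vdeg, Walk.pow_vdeg w n]; ring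

/-- Lift a walk of `Q` to the covering. -/
lemma cover_lift {Q : GradedQuiver} : ∀ {a b : Q.V} (w : Q.Walk a b) (j : ℤ),
    Nonempty (Q.Cover.Walk (a, j) (b, j + w.vdeg))
  | _, _, .nil a, j => by
      have : j + (Walk.nil (Q := Q) a).vdeg = j := by simp [Walk.vdeg]
      rw [this]; exact ⟨.nil _⟩
  | _, _, .consArr w e, j => by
      obtain ⟨p⟩ := cover_lift w j
      exact ⟨p.consArr ⟨e, by simp [Walk.vdeg]; ring⟩⟩
  | _, _, .consInv w e, j => by
      obtain ⟨p⟩ := cover_lift w j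
      exact ⟨Walk.consInv (c := (_, j + (Walk.consInv w e).vdeg)) p
        ⟨e, by simp [Walk.vdeg]; ring⟩⟩

lemma cover_lift' {Q : GradedQuiver} {a b : Q.V} (w : Q.Walk a b) {j k : ℤ}
    (h : k = j + w.vdeg) : Nonempty (Q.Cover.Walk (a, j) (b, k)) := by
  rw [h]; exact cover_lift w j

/-- Project a walk of the covering to `Q`. -/
lemma cover_proj {Q : GradedQuiver} : ∀ {x y : Q.Cover.V} (_ : Q.Cover.Walk x y),
    ∃ w : Q.Walk x.1 y.1, w.vdeg = y.2 - x.2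
  | _, _, .nil _ => ⟨.nil _, by simp [Walk.vdeg]⟩
  | _, _, .consArr p e => by
      obtain ⟨w, hw⟩ := cover_proj p
      exact ⟨w.consArr e.val, by simp [Walk.vdeg, hw, e.property]; ring⟩
  | _, _, .consInv p e => by
      obtain ⟨w, hw⟩ := cover_proj p
      exact ⟨w.consInv e.val, by simp [Walk.vdeg, hw, e.property]; ring⟩

lemma cover_walk_iff {Q : GradedQuiver} {a b : Q.V} {j k : ℤ} :
    Nonempty (Q.Cover.Walk (a, j) (b, k)) ↔ ∃ w : Q.Walk a b, w.vdeg = k - j := by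
  constructor
  · rintro ⟨p⟩; exact cover_proj p
  · rintro ⟨w, hw⟩; exact cover_lift' w (by omega)

end GradedQuiver


/-- The component of `(i,j)` in the covering is isomorphic to `Q̃`. -/
def componentIso (Q : GradedQuiver) (i : Q.V) (j : ℤ) :
    QuivIso (GradedQuiver.Component Q (i, j)) (Q.Tilde i) where
  vEquiv :=
    { toFun := fun x => ⟨(x.val.1, x.val.2 - j), by
        obtain ⟨w, hw⟩ := GradedQuiver.cover_proj x.property.some
        exact ⟨w, hw⟩⟩
      invFun := fun c => ⟨(c.val.1, c.val.2 + j), by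
        obtain ⟨w, hw⟩ := c.property
        exact GradedQuiver.cover_lift' w (by omega)⟩
      left_inv := fun x => by apply Subtype.ext; apply Prod.ext <;> simp
      right_inv := fun c => by apply Subtype.ext; apply Prod.ext <;> simp }
  aEquiv := fun x y =>
    Equiv.subtypeEquiv (Equiv.refl _) (fun e => by dsimp; change _ ↔ y.val.2 - j = x.val.2 - j + (1 - Q.deg e); omega)

/-- let `Q` be a finite connected graded quiver with grading period
`r ≥ 1` and fixed vertex `i`. Then the ℤ-covering quiver `P` is the disjoint union
of the connected components `P^0, …, P^{r-1}` of the vertices `(i,0), …, (i,r-1)`: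
every vertex lies in one of them, `P^j = P^{j'}` iff `j ≡ j' (mod r)`, and all
components are isomorphic to the covering quiver `Q̃` of walk-classes at `i`. -/
theorem stmt_13 (Q : GradedQuiver) (hV : Finite Q.V) (hA : ∀ a b : Q.V, Finite (Q.Arr a b))
    (hconn : Q.Connected) (r : ℕ) (hr : 1 ≤ r) (hper : Q.IsGradingPeriod r) (i : Q.V) :
    (∀ x : Q.Cover.V, ∃ j : ℤ, 0 ≤ j ∧ j < (r : ℤ) ∧ Nonempty (Q.Cover.Walk (i, j) x)) ∧
    (∀ j j' : ℤ, Nonempty (Q.Cover.Walk (i, j) (i, j')) ↔ (r : ℤ) ∣ (j - j')) ∧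
    (∀ j : ℤ, Nonempty (QuivIso (GradedQuiver.Component Q (i, j)) (Q.Tilde i))) := by
  classical
  obtain h0 | ⟨hrpos, ⟨a0, w0, hw0⟩, hmin⟩ := hper
  · omega
  -- closed walk of vdeg r at any vertex
  have closedr : ∀ a : Q.V, ∃ w : Q.Walk a a, w.vdeg = (r : ℤ) := by
    intro a
    obtain ⟨u⟩ := hconn a a0
    refine ⟨u.comp (w0.comp u.rev), ?_⟩
    simp [GradedQuiver.Walk.comp_vdeg, GradedQuiver.Walk.rev_vdeg, hw0]
  -- closed walk of vdeg m * r at any vertex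
  have mult : ∀ (a : Q.V) (m : ℤ), ∃ w : Q.Walk a a, w.vdeg = m * (r : ℤ) := by
    intro a m
    obtain ⟨w, hw⟩ := closedr a
    rcases le_or_gt 0 m with hm | hm
    · obtain ⟨n, rfl⟩ := Int.eq_ofNat_of_zero_le hm
      exact ⟨w.pow n, by rw [GradedQuiver.Walk.pow_vdeg, hw]⟩
    · obtain ⟨n, hn⟩ := Int.eq_ofNat_of_zero_le (by omega : (0:ℤ) ≤ -m)
      refine ⟨(w.pow n).rev, ?_⟩
      rw [GradedQuiver.Walk.rev_vdeg, GradedQuiver.Walk.pow_vdeg, hw]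
      rw [show m = -(n:ℤ) by omega]; ring
  -- every closed walk has vdeg divisible by r
  have dvdall : ∀ (a : Q.V) (w : Q.Walk a a), (r : ℤ) ∣ w.vdeg := by
    intro a w
    set t := w.vdeg with ht
    by_contra hnd
    obtain ⟨u, hu⟩ := mult a (-(t / (r : ℤ)))
    have hs : (w.comp u).vdeg = t % (r : ℤ) := by
      rw [GradedQuiver.Walk.comp_vdeg, hu, ← ht, Int.emod_def]; ring
    have hpos : 0 < t % (r : ℤ) := by
      rcases (Int.emod_nonneg t (by exact_mod_cast hrpos.ne' : (r:ℤ) ≠ 0)).lt_or_eq with h | h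
      · exact h
      · exact absurd (Int.dvd_of_emod_eq_zero h.symm) hnd
    have hlt : t % (r : ℤ) < (r : ℤ) := Int.emod_lt_of_pos t (by exact_mod_cast hrpos)
    have := hmin a (w.comp u) (hs ▸ hpos)
    omega
  refine ⟨?_, ?_, ?_⟩
  · rintro ⟨b, k⟩
    obtain ⟨w⟩ := hconn i b
    refine ⟨(k - w.vdeg) % (r : ℤ), Int.emod_nonneg _ (by exact_mod_cast hrpos.ne'),
      Int.emod_lt_of_pos _ (by exact_mod_cast hrpos), ?_⟩
    rw [GradedQuiver.cover_walk_iff]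
    obtain ⟨u, hu⟩ := mult i ((k - w.vdeg) / (r : ℤ))
    refine ⟨u.comp w, ?_⟩
    rw [GradedQuiver.Walk.comp_vdeg, hu]
    have h1 := Int.mul_ediv_add_emod (k - w.vdeg) (r : ℤ)
    rw [mul_comm] at h1
    omega
  · intro j j'
    rw [GradedQuiver.cover_walk_iff]
    constructor
    · rintro ⟨w, hw⟩
      have := dvdall i w
      rw [hw] at this
      exact dvd_sub_comm.mp this
    · rintro ⟨m, hm⟩
      obtain ⟨u, hu⟩ := mult i (-m)
      refine ⟨u, ?_⟩
      have h2 : j' - j = -((r : ℤ) * m) := by omega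
      rw [hu, h2]; ring
  · intro j
    exact ⟨componentIso Q i j⟩
end

section
/- Let Q be a finite connected graded quiver with fixed vertex i and let Q̃ be its covering quiver of walk-classes at i. Then the map ρ: Q̃ → P given by ρ([u]) = (t(u), d(u)) on vertices and ρ(α^[u]) = (α, d(u)) on arrows is an injective quiver-morphism whose image is exactly the connected component P^0 of P containing (i,0); hence Q̃ ≅ P^0. -/
/-!
A walk `u` of `Q` from `a` lifts, letter by letter, to a walk of `P` from `(a, j)` to
`(t u, j + d u)`; conversely a walk of `P` projects to a walk of `Q` whose virtual degree is the
difference of the `ℤ`-coordinates of its endpoints. Hence the pairs `(t u, d u)` with `u` starting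
at `i` are exactly the vertices of `P` reachable from `(i, 0)`, and between two such vertices
`Q̃` and `P⁰` have, by construction, the same arrows.
-/

namespace GradedQuiver

variable {Q : GradedQuiver}

theorem Walk.nonempty_coverWalk {a : Q.V} (j : ℤ) :
    ∀ {b : Q.V} (u : Q.Walk a b), Nonempty (Q.Cover.Walk (a, j) (b, j + u.vdeg))
  | _, .nil _ => ⟨by simpa [Walk.vdeg] using Walk.nil (Q := Q.Cover) (a, j)⟩
  | _, .consArr w e => by
      obtain ⟨W⟩ := w.nonempty_coverWalk j
      exact ⟨.consArr W ⟨e, by simp only [Walk.vdeg]; ring⟩⟩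
  | _, .consInv w e => by
      obtain ⟨W⟩ := w.nonempty_coverWalk j
      exact ⟨.consInv W ⟨e, by simp only [Walk.vdeg]; ring⟩⟩

def Walk.ofCover : ∀ {x y : Q.Cover.V}, Q.Cover.Walk x y → Q.Walk x.1 y.1
  | _, _, .nil _ => .nil _
  | _, _, .consArr W e => .consArr W.ofCover e.val
  | _, _, .consInv W e => .consInv W.ofCover e.val

theorem Walk.vdeg_ofCover : ∀ {x y : Q.Cover.V} (W : Q.Cover.Walk x y),
    W.ofCover.vdeg = y.2 - x.2
  | _, _, .nil _ => by simp [Walk.ofCover, Walk.vdeg]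
  | _, _, .consArr W e => by
      have := e.property
      simp only [Walk.ofCover, Walk.vdeg, W.vdeg_ofCover]
      omega
  | _, _, .consInv W e => by
      have := e.property
      simp only [Walk.ofCover, Walk.vdeg, W.vdeg_ofCover]
      omega

theorem exists_walk_vdeg_iff_nonempty_coverWalk (a : Q.V) (x : Q.Cover.V) :
    (∃ u : Q.Walk a x.1, u.vdeg = x.2) ↔ Nonempty (Q.Cover.Walk (a, 0) x) := by
  obtain ⟨b, k⟩ := x
  constructor
  · rintro ⟨u, hu⟩
    simpa [hu] using u.nonempty_coverWalk 0
  · rintro ⟨W⟩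
    exact ⟨W.ofCover, by simpa using W.vdeg_ofCover⟩

def tildeIsoComponent (i : Q.V) : QuivIso (Q.Tilde i) (Q.Component (i, 0)) where
  vEquiv := Equiv.subtypeEquivRight (exists_walk_vdeg_iff_nonempty_coverWalk i)
  aEquiv _ _ := Equiv.refl _

end GradedQuiver

theorem stmt_14_general (Q : GradedQuiver) (i : Q.V) :
    Function.Injective (fun c : (Q.Tilde i).V => c.val) ∧
    (∀ c c' : (Q.Tilde i).V,
      Function.Injective (fun a : (Q.Tilde i).Arr c c' =>
        (⟨a.val, a.property⟩ : Q.Cover.Arr c.val c'.val))) ∧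
    (∀ x : Q.Cover.V, (∃ c : (Q.Tilde i).V, c.val = x) ↔
      Nonempty (Q.Cover.Walk (i, 0) x)) ∧
    Nonempty (QuivIso (Q.Tilde i) (GradedQuiver.Component Q (i, 0))) := by
  refine ⟨Subtype.val_injective, fun _ _ a b h => Subtype.ext (congrArg Subtype.val h),
    fun x => ?_, ⟨GradedQuiver.tildeIsoComponent i⟩⟩
  rw [← GradedQuiver.exists_walk_vdeg_iff_nonempty_coverWalk i x]
  exact ⟨fun ⟨c, hc⟩ => hc ▸ c.property, fun h => ⟨⟨x, h⟩, rfl⟩⟩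

/-- let `Q` be a finite connected graded quiver with fixed vertex `i`
and `Q̃` its covering quiver of walk-classes at `i`. The map `ρ : Q̃ → P`,
`[u] ↦ (t(u), d(u))` on vertices and `α^[u] ↦ (α, d(u))` on arrows, is an injective
quiver-morphism whose image is exactly the connected component `P^0` of `P`
containing `(i,0)`; hence `Q̃ ≅ P^0`. -/
theorem stmt_14 (Q : GradedQuiver) (hV : Finite Q.V) (hA : ∀ a b : Q.V, Finite (Q.Arr a b))
    (hconn : Q.Connected) (i : Q.V) :
    Function.Injective (fun c : (Q.Tilde i).V => c.val) ∧
    (∀ c c' : (Q.Tilde i).V,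
      Function.Injective (fun a : (Q.Tilde i).Arr c c' =>
        (⟨a.val, a.property⟩ : Q.Cover.Arr c.val c'.val))) ∧
    (∀ x : Q.Cover.V, (∃ c : (Q.Tilde i).V, c.val = x) ↔
      Nonempty (Q.Cover.Walk (i, 0) x)) ∧
    Nonempty (QuivIso (Q.Tilde i) (GradedQuiver.Component Q (i, 0))) :=
  stmt_14_general Q i
end

section
/- Let Q be a finite connected graded quiver without oriented cycles of virtual degree 0, and P its ℤ-covering quiver. Then P has a left infinite path (an infinite sequence of composable arrows extending to the left) if and only if Q has an oriented cycle. Equivalently, P has no left infinite paths iff Q is acyclic. -/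
namespace GradedQuiver

variable {Q : GradedQuiver}

/-- The vertex of a path at position `k` from the start (the target for `k ≥ length`). -/
def pathVertex : ∀ {a b : Q.V}, Q.Path a b → ℕ → Q.V
  | a, _, .nil _, _ => a
  | _, c, .cons p _, k => if k ≤ p.length then pathVertex p k else c

theorem pathVertex_zero : ∀ {a b : Q.V} (p : Q.Path a b), pathVertex p 0 = a
  | _, _, .nil _ => by simp [pathVertex]
  | _, _, .cons p _ => by simp [pathVertex, pathVertex_zero p]

theorem pathVertex_of_ge : ∀ {a b : Q.V} (p : Q.Path a b) {k : ℕ},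
    p.length ≤ k → pathVertex p k = b
  | _, _, .nil _, _, _ => by simp [pathVertex]
  | _, _, .cons p e, k, h => by
      have hh : ¬ k ≤ p.length := by
        simp only [Path.length] at h; omega
      simp [pathVertex, hh]

theorem pathArr : ∀ {a b : Q.V} (p : Q.Path a b) {k : ℕ}, k < p.length →
    Nonempty (Q.Arr (pathVertex p k) (pathVertex p (k + 1)))
  | _, _, .nil _, k, h => by simp [Path.length] at h
  | _, _, .cons p e, k, h => by
      have h' : k ≤ p.length := by
        simp only [Path.length] at h; omega
      rcases lt_or_eq_of_le h' with h1 | h1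
      · have h2 : k + 1 ≤ p.length := h1
        simpa [pathVertex, h', h2] using pathArr p h1
      · have h2 : ¬ (k + 1 ≤ p.length) := by omega
        simp only [pathVertex, if_pos h', if_neg h2]
        rw [pathVertex_of_ge p (le_of_eq h1.symm)]
        exact ⟨e⟩

theorem exists_lift_nil (a : Q.V) (j j' : ℤ) (h : j' = j) :
    ∃ q : Q.Cover.Path (a, j) (a, j'), q.length = 0 := by
  subst h; exact ⟨.nil _, Path.length.eq_1 _⟩

theorem exists_lift : ∀ {a b : Q.V} (p : Q.Path a b) (j : ℤ),
    ∃ q : Q.Cover.Path (a, j) (b, j + p.vdeg), q.length = p.length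
  | _, _, .nil x, j => by
      have h0 : (Path.nil (Q := Q) x).length = 0 := by simp [Path.length]
      rw [h0]
      exact exists_lift_nil x j _ (by simp [Path.vdeg])
  | _, _, .cons p e, j => by
      obtain ⟨q, hq⟩ := exists_lift p j
      refine ⟨q.cons ⟨e, ?_⟩, ?_⟩
      · show j + (Path.cons p e).vdeg = (j + p.vdeg) + (1 - Q.deg e)
        simp only [Path.vdeg]; ring
      · exact Eq.trans (Path.length.eq_2 _ _ _ _ _) ((congrArg (· + 1) hq).trans (Path.length.eq_2 _ _ _ _ _).symm)

theorem exists_chain (v : ℕ → Q.Cover.V) (E : ∀ n, Q.Cover.Arr (v (n + 1)) (v n)) :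
    ∀ (k m : ℕ), ∃ p : Q.Path (v (k + m)).1 (v m).1, p.length = k
  | 0, m => by rw [Nat.zero_add]; exact ⟨.nil _, by simp [Path.length]⟩
  | k + 1, m => by
      obtain ⟨p, hp⟩ := exists_chain v E k (m + 1)
      rw [show k + 1 + m = k + (m + 1) from by omega]
      exact ⟨p.cons (E m).1, by simp [Path.length, hp]⟩

theorem path_cast_exists {a a' b b' : Q.V} (ha : a = a') (hb : b = b')
    (h : ∃ p : Q.Path a b, 0 < p.length) : ∃ p : Q.Path a' b', 0 < p.length := by
  subst ha; subst hb; exact h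

theorem div_mod_eq {L q r n : ℕ} (hL : 0 < L) (hr : r < L) (hn : n = L * q + r) :
    n / L = q ∧ n % L = r := by
  subst hn
  rw [Nat.mul_add_div hL, Nat.mul_add_mod]
  exact ⟨by rw [Nat.div_eq_of_lt hr, add_zero], Nat.mod_eq_of_lt hr⟩

theorem backward_aux (a : Q.V) (p : Q.Path a a) (hp : 0 < p.length) :
    ∃ v : ℕ → Q.Cover.V, Nonempty (∀ n : ℕ, Q.Cover.Arr (v (n + 1)) (v n)) := by
  choose q hq using fun j : ℤ => exists_lift p j
  have key : ∀ n : ℕ, Nonempty (Q.Cover.Arr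
      (pathVertex (q ((-(((n + 1) / p.length : ℕ) : ℤ) - 1) * p.vdeg))
        (p.length - (n + 1) % p.length))
      (pathVertex (q ((-((n / p.length : ℕ) : ℤ) - 1) * p.vdeg))
        (p.length - n % p.length))) := by
    intro n
    have e1 : p.length * (n / p.length) + n % p.length = n := Nat.div_add_mod n p.length
    have hmlt : n % p.length < p.length := Nat.mod_lt _ hp
    by_cases hcase : n % p.length + 1 < p.length
    · have hA := div_mod_eq hp hcase
        (show n + 1 = p.length * (n / p.length) + (n % p.length + 1) by
          rw [← Nat.add_assoc, e1])
      rw [hA.1, hA.2]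
      rw [show p.length - n % p.length = (p.length - (n % p.length + 1)) + 1 from by omega]
      exact pathArr _ (by rw [hq]; omega)
    · have hrn : n % p.length + 1 = p.length := by omega
      have hB := div_mod_eq hp hp (show n + 1 = p.length * (n / p.length + 1) + 0 from by
        calc n + 1 = (p.length * (n / p.length) + n % p.length) + 1 := by rw [e1]
          _ = p.length * (n / p.length) + (n % p.length + 1) := by rw [Nat.add_assoc]
          _ = p.length * (n / p.length) + p.length := by rw [hrn]
          _ = p.length * (n / p.length + 1) + 0 := by rw [Nat.mul_succ, Nat.add_zero])
      obtain ⟨e⟩ := pathArr (q ((-((n / p.length : ℕ) : ℤ) - 1) * p.vdeg)) (k := 0)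
        (by rw [hq]; omega)
      rw [pathVertex_zero (q ((-((n / p.length : ℕ) : ℤ) - 1) * p.vdeg))] at e
      rw [hB.1, hB.2, Nat.sub_zero,
        show p.length - n % p.length = 1 from by omega,
        pathVertex_of_ge (q _) (le_of_eq (hq _)),
        show ((a, (-(((n / p.length + 1 : ℕ)) : ℤ) - 1) * p.vdeg + p.vdeg) : Q.Cover.V)
          = ((a, (-((n / p.length : ℕ) : ℤ) - 1) * p.vdeg) : Q.Cover.V) from by
            refine Prod.ext rfl ?_
            push_cast
            ring]
      exact ⟨e⟩
  exact ⟨fun n => pathVertex (q ((-((n / p.length : ℕ) : ℤ) - 1) * p.vdeg))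
      (p.length - n % p.length),
    ⟨fun n => (key n).some⟩⟩

end GradedQuiver

/-- let `Q` be a finite connected graded quiver without oriented
cycles of virtual degree `0`, and `P` its ℤ-covering quiver. Then `P` has a left
infinite path (an infinite sequence of composable arrows extending to the left) if
and only if `Q` has an oriented cycle (a non-trivial path from some vertex to
itself). -/
theorem stmt_16 (Q : GradedQuiver) (hV : Finite Q.V) (hA : ∀ a b : Q.V, Finite (Q.Arr a b))
    (hconn : Q.Connected)
    (hcyc : ∀ (a : Q.V) (p : Q.Path a a), 0 < p.length → p.vdeg ≠ 0) :
    (∃ v : ℕ → Q.Cover.V, Nonempty (∀ n : ℕ, Q.Cover.Arr (v (n + 1)) (v n))) ↔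
    (∃ (a : Q.V) (p : Q.Path a a), 0 < p.length) := by
  constructor
  · rintro ⟨v, ⟨E⟩⟩
    have : Finite Q.V := hV
    obtain ⟨m, n, hmn, h⟩ := Finite.exists_ne_map_eq_of_infinite (fun k : ℕ => (v k).1)
    have main : ∀ m n : ℕ, m < n → (v m).1 = (v n).1 →
        ∃ (a : Q.V) (p : Q.Path a a), 0 < p.length := by
      intro m n hlt h
      obtain ⟨p, hp⟩ := GradedQuiver.exists_chain v E (n - m) m
      refine ⟨(v m).1, ?_⟩
      refine GradedQuiver.path_cast_exists (a := (v (n - m + m)).1) ?_ rfl ⟨p, by omega⟩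
      rw [show n - m + m = n from by omega, ← h]
    rcases Nat.lt_or_ge m n with hlt | hge
    · exact main m n hlt h
    · exact main n m (lt_of_le_of_ne hge hmn.symm) h.symm
  · rintro ⟨a, p, hp⟩
    exact GradedQuiver.backward_aux a p hp
end

section
/- Let Q be a finite connected graded quiver without oriented cycles of virtual degree 0, and P its ℤ-covering quiver. Then P has a right infinite path if and only if Q has an oriented cycle. -/
/-!
The projection `(i, j) ↦ i` sends a right infinite path of the covering `P` to one of `Q`, and
conversely a right infinite path of `Q` lifts to `P` by choosing the ℤ-coordinates recursively, so
the question is whether `Q` itself has a right infinite path. Since `Q` has finitely many vertices,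
such a path revisits a vertex, and the segment in between is an oriented cycle. Conversely, if `a` lies
on an oriented cycle, then every vertex with a path to `a` has an arrow to another such vertex (the
first arrow of that path followed by the cycle), so one can walk forever among these vertices.
-/

namespace GradedQuiver

variable {Q : GradedQuiver}

def HasInfinitePath (Q : GradedQuiver) : Prop :=
  ∃ v : ℕ → Q.V, Nonempty (∀ n, Q.Arr (v n) (v (n + 1)))

def HasCycle (Q : GradedQuiver) : Prop :=
  ∃ (a : Q.V) (p : Q.Path a a), 0 < p.length

namespace Path

def comp : ∀ {a b c : Q.V}, Q.Path a b → Q.Path b c → Q.Path a c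
  | _, _, _, p, .nil _ => p
  | _, _, _, p, .cons q e => .cons (p.comp q) e

@[simp]
lemma length_comp : ∀ {a b c : Q.V} (p : Q.Path a b) (q : Q.Path b c),
    (p.comp q).length = p.length + q.length
  | _, _, _, _, .nil _ => by simp only [comp, length, Nat.add_zero]
  | _, _, _, p, .cons q e => by simp only [comp, length, length_comp p q, Nat.add_assoc]

lemma exists_arr_path_of_length_pos : ∀ {a b : Q.V} (p : Q.Path a b), 0 < p.length →
    ∃ c, Nonempty (Q.Arr a c) ∧ Nonempty (Q.Path c b)
  | _, _, .nil _, h => by simp only [length, lt_irrefl] at h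
  | _, _, .cons (.nil _) e, _ => ⟨_, ⟨e⟩, ⟨.nil _⟩⟩
  | _, _, .cons (.cons p e') e, _ => by
      obtain ⟨c, ⟨f⟩, ⟨q⟩⟩ :=
        exists_arr_path_of_length_pos (.cons p e') (by simp only [length, Nat.succ_pos])
      exact ⟨c, ⟨f⟩, ⟨.cons q e⟩⟩

end Path

lemma hasCycle_of_path {a b : Q.V} (h : a = b) (p : Q.Path a b) (hp : 0 < p.length) :
    Q.HasCycle := by
  subst h
  exact ⟨a, p, hp⟩

lemma hasInfinitePath_of_forall_exists_arr (S : Set Q.V) {a : Q.V} (ha : a ∈ S)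
    (hS : ∀ b ∈ S, ∃ c ∈ S, Nonempty (Q.Arr b c)) : Q.HasInfinitePath := by
  choose f hfS hf using hS
  let step : S → S := fun b => ⟨f b b.2, hfS b b.2⟩
  refine ⟨fun n => (step^[n] ⟨a, ha⟩ : Q.V), ⟨fun n => ?_⟩⟩
  dsimp only
  rw [Function.iterate_succ_apply']
  exact (hf _ _).some

lemma HasCycle.hasInfinitePath (h : Q.HasCycle) : Q.HasInfinitePath := by
  obtain ⟨a, p, hp⟩ := h
  refine hasInfinitePath_of_forall_exists_arr {b | Nonempty (Q.Path b a)} ⟨.nil a⟩ ?_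
  rintro b ⟨q⟩
  obtain ⟨c, he, hc⟩ := (q.comp p).exists_arr_path_of_length_pos (by simp [hp])
  exact ⟨c, hc, he⟩

def segment (v : ℕ → Q.V) (e : ∀ n, Q.Arr (v n) (v (n + 1))) (m : ℕ) :
    ∀ k, Q.Path (v m) (v (m + k))
  | 0 => .nil _
  | k + 1 => .cons (segment v e m k) (e (m + k))

@[simp]
lemma length_segment (v : ℕ → Q.V) (e : ∀ n, Q.Arr (v n) (v (n + 1))) (m : ℕ) :
    ∀ k, (segment v e m k).length = k
  | 0 => by simp only [segment, Path.length]
  | k + 1 => by simp only [segment, Path.length, length_segment v e m k]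

lemma HasInfinitePath.hasCycle [Finite Q.V] (h : Q.HasInfinitePath) : Q.HasCycle := by
  obtain ⟨v, ⟨e⟩⟩ := h
  obtain ⟨m, n, hmn, hv⟩ := Finite.exists_ne_map_eq_of_infinite v
  wlog hlt : m < n generalizing m n
  · exact this n m hmn.symm hv.symm (hmn.lt_or_gt.resolve_left hlt)
  obtain ⟨k, rfl⟩ := Nat.exists_eq_add_of_lt hlt
  exact hasCycle_of_path hv (segment v e m (k + 1)) (by simp)

def liftHeight (v : ℕ → Q.V) (e : ∀ n, Q.Arr (v n) (v (n + 1))) : ℕ → ℤ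
  | 0 => 0
  | n + 1 => liftHeight v e n + (1 - Q.deg (e n))

lemma hasInfinitePath_cover_iff : Q.Cover.HasInfinitePath ↔ Q.HasInfinitePath := by
  constructor
  · rintro ⟨v, ⟨e⟩⟩
    exact ⟨fun n => (v n).1, ⟨fun n => (e n).1⟩⟩
  · rintro ⟨v, ⟨e⟩⟩
    exact ⟨fun n => (v n, liftHeight v e n), ⟨fun n => ⟨e n, rfl⟩⟩⟩

end GradedQuiver

theorem stmt_17_general (Q : GradedQuiver) (hV : Finite Q.V) :
    (∃ v : ℕ → Q.Cover.V, Nonempty (∀ n : ℕ, Q.Cover.Arr (v n) (v (n + 1)))) ↔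
    (∃ (a : Q.V) (p : Q.Path a a), 0 < p.length) :=
  GradedQuiver.hasInfinitePath_cover_iff.trans
    ⟨GradedQuiver.HasInfinitePath.hasCycle, GradedQuiver.HasCycle.hasInfinitePath⟩

/-- let `Q` be a finite connected graded quiver without oriented
cycles of virtual degree `0`, and `P` its ℤ-covering quiver. Then `P` has a right
infinite path (an infinite sequence of composable arrows `β₁, β₂, …` with
`t(βₙ) = s(βₙ₊₁)`) if and only if `Q` has an oriented cycle. -/
theorem stmt_17 (Q : GradedQuiver) (hV : Finite Q.V) (hA : ∀ a b : Q.V, Finite (Q.Arr a b))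
    (hconn : Q.Connected)
    (hcyc : ∀ (a : Q.V) (p : Q.Path a a), 0 < p.length → p.vdeg ≠ 0) :
    (∃ v : ℕ → Q.Cover.V, Nonempty (∀ n : ℕ, Q.Cover.Arr (v n) (v (n + 1)))) ↔
    (∃ (a : Q.V) (p : Q.Path a a), 0 < p.length) :=
  stmt_17_general Q hV
end
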